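/- Let T be a standard tableau and r_1 < r_2 < ... < r_{k-1} values smaller than every entry of T being column-inserted in decreasing order r_{k-1}, ..., r_1 into T. Then in the resulting tableau T', the entry r_i occupies a box in column i for each 1 ≤ i ≤ k-1. -/

import Mathlib

/-! Since every inserted value is smaller than all entries present, each insertion bumps the
top entry of every column one column to the right and puts the new value on top of the first
column; the entries below the tops never move. Hence inserting `r_{k-1}, …, r_1` leaves the
tops `r_1, …, r_{k-1}` followed by the old tops, and `r_i` sits on top of column `i`. -/

/-- Column insertion of a value into a tableau represented as a list of columns
(each column a strictly increasing list, read top to bottom). The value bumps the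
smallest entry of the first column larger than it (or is appended at the bottom),
and any bumped entry is inserted into the next column. -/
def insertCol : ℕ → List (List ℕ) → List (List ℕ)
  | v, [] => [[v]]
  | v, c :: cs =>
    match c.find? (fun x => v < x) with
    | none => (c ++ [v]) :: cs
    | some x => (c.map fun y => if y = x then v else y) :: insertCol x cs

/-- Place the entry `i` at the bottom of the `j`-th column (0-based). -/
def placeAt (i : ℕ) : ℕ → List (List ℕ) → List (List ℕ)
  | 0, [] => [[i]]
  | 0, c :: cs => (c ++ [i]) :: cs
  | _ + 1, [] => [[i]]
  | j + 1, c :: cs => c :: placeAt i j cs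

/-- The shape of a tableau: the list of its column lengths. -/
def shapeOf (T : List (List ℕ)) : List ℕ := T.map List.length

/-- Index of the first position where two lists differ. -/
def diffIdx : List ℕ → List ℕ → ℕ
  | a :: as, b :: bs => if a = b then diffIdx as bs + 1 else 0
  | _, _ => 0

/-- The Robinson–Schensted pair `(P, Q)` of a word `w = [w 1, …, w n]` (one-line
notation): `P` is obtained by column inserting `w n, w (n-1), …, w 1` into the empty
tableau, and `Q` records, with entry `i`, the box added at the `i`-th insertion step. -/
def RSpair (w : List ℕ) : List (List ℕ) × List (List ℕ) :=
  w.reverse.zipIdx.foldl (fun PQ p =>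
    let P' := insertCol p.1 PQ.1
    (P', placeAt (p.2 + 1) (diffIdx (shapeOf PQ.1) (shapeOf P')) PQ.2)) ([], [])

/-- The Robinson–Schensted `P`-symbol (insertion tableau) of a word. -/
def Psymb (w : List ℕ) : List (List ℕ) := (RSpair w).1

/-- The Robinson–Schensted `Q`-symbol (recording tableau) of a word. -/
def Qsymb (w : List ℕ) : List (List ℕ) := (RSpair w).2

/-- One-line notation (1-based values) of a permutation of `Fin n`. -/
def oneLine {n : ℕ} (w : Equiv.Perm (Fin n)) : List ℕ := List.ofFn fun i => (w i : ℕ) + 1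

/-- The `P`-symbol of a permutation. Two permutations of `S_n` lie in the same right
Kazhdan–Lusztig cell iff their `P`-symbols coincide. -/
def RSP {n : ℕ} (w : Equiv.Perm (Fin n)) : List (List ℕ) := Psymb (oneLine w)

/-- The `Q`-symbol of a permutation. Two permutations of `S_n` lie in the same left
Kazhdan–Lusztig cell iff their `Q`-symbols coincide. -/
def RSQ {n : ℕ} (w : Equiv.Perm (Fin n)) : List (List ℕ) := Qsymb (oneLine w)

/-- A list of columns is a standard tableau: columns are nonempty and strictly
increasing, column lengths weakly decrease, and rows strictly increase. -/
def ColsStandard (T : List (List ℕ)) : Prop :=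
  (∀ c ∈ T, c ≠ [] ∧ c.Pairwise (· < ·)) ∧
  T.Chain' (fun c c' => c'.length ≤ c.length ∧ ∀ i < c'.length, c.getD i 0 < c'.getD i 0)

/-- A standard Young tableau with `n` boxes: standard, with entries exactly `1, …, n`. -/
def IsSYT (n : ℕ) (T : List (List ℕ)) : Prop :=
  ColsStandard T ∧ T.flatten.Perm (List.range' 1 n)

/-- The (1-based) index of the column of `T` containing the entry `s`. -/
def colIndex (T : List (List ℕ)) (s : ℕ) : ℕ := T.findIdx (fun c => c.contains s) + 1

/-- The number of inversions `ℓ(f) = #{(i,j) : i < j, f i > f j}`. -/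
def invNum {N : ℕ} (f : Fin N → ℕ) : ℕ :=
  (Finset.univ.filter fun p : Fin N × Fin N => p.1 < p.2 ∧ f p.2 < f p.1).card

/-- Ehresmann's tableau (rank-matrix) characterisation of the Bruhat order, stated for
arbitrary functions: `f ≤ g` iff `#{i ≤ p : f i ≥ q} ≤ #{i ≤ p : g i ≥ q}` for all `p, q`. -/
def rankLE {N : ℕ} (f g : Fin N → ℕ) : Prop :=
  ∀ p q : ℕ,
    (Finset.univ.filter fun i : Fin N => (i : ℕ) ≤ p ∧ q ≤ f i).card ≤
      (Finset.univ.filter fun i : Fin N => (i : ℕ) ≤ p ∧ q ≤ g i).card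

/-- The Bruhat order on the symmetric group `S_N`. -/
def bruhatLE {N : ℕ} (x y : Equiv.Perm (Fin N)) : Prop :=
  rankLE (fun i => (x i : ℕ)) (fun i => (y i : ℕ))

/-- Equation (2.1) of Lanini–McNamara, in 0-based terms: given `x : Fin n → ℕ`
(0-based one-line values), produce the one-line values of `x' ∈ S_{n+t}`:
`x' i = k + i` for `i < t`; for `i ≥ t`, `x' i = x (i - t)` if `x (i - t) < k`
and `x' i = x (i - t) + t` otherwise. -/
def primeMap (n t k : ℕ) (x : Fin n → ℕ) : Fin (n + t) → ℕ := fun i =>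
  if _h : (i : ℕ) < t then k + i
  else
    have hi : (i : ℕ) - t < n := by omega
    if x ⟨(i : ℕ) - t, hi⟩ < k then x ⟨(i : ℕ) - t, hi⟩ else x ⟨(i : ℕ) - t, hi⟩ + t

namespace ColumnInsertion

def shiftTops (v : ℕ) : List (List ℕ) → List (List ℕ)
  | [] => [[v]]
  | [] :: cs => [v] :: cs
  | (a :: t) :: cs => (v :: t) :: shiftTops a cs

-- Weaker than `ColsStandard`, but all that inserting values below every entry needs.
def TopsBelowLater (U : List (List ℕ)) : Prop :=
  (∀ c ∈ U, c ≠ [] ∧ c.Pairwise (· < ·)) ∧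
    U.Pairwise fun c c' => ∀ b ∈ c', c.headD 0 < b

lemma headD_le_of_mem {c : List ℕ} (hc : c.Pairwise (· < ·)) {b : ℕ} (hb : b ∈ c) :
    c.headD 0 ≤ b := by
  cases c with
  | nil => simp at hb
  | cons a t =>
    rcases List.mem_cons.1 hb with rfl | hb
    · rfl
    · exact (List.rel_of_pairwise_cons hc hb).le

lemma topsBelowLater_cons {c : List ℕ} {cs : List (List ℕ)} :
    TopsBelowLater (c :: cs) ↔
      (c ≠ [] ∧ c.Pairwise (· < ·)) ∧ (∀ b ∈ cs.flatten, c.headD 0 < b) ∧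
        TopsBelowLater cs := by
  simp only [TopsBelowLater, List.forall_mem_cons, List.pairwise_cons, List.mem_flatten]
  grind

lemma topsBelowLater_of_colsStandard {T : List (List ℕ)} (hT : ColsStandard T) :
    TopsBelowLater T := by
  obtain ⟨hcols, hrows⟩ := hT
  have htops : (T.map (·.headD 0)).IsChain (· < ·) := by
    rw [List.isChain_map]
    refine hrows.imp_of_mem_imp fun c c' _ hc' hrow => ?_
    obtain ⟨a, t, rfl⟩ := List.exists_cons_of_ne_nil (hcols c' hc').1
    cases c <;> simpa using hrow.2 0 (by simp)
  refine ⟨hcols, (List.pairwise_map.1 htops.pairwise).imp_of_mem fun _ hc' hlt b hb => ?_⟩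
  exact hlt.trans_le (headD_le_of_mem (hcols _ hc').2 hb)

lemma mem_flatten_shiftTops {v b : ℕ} {U : List (List ℕ)}
    (hb : b ∈ (shiftTops v U).flatten) : b = v ∨ b ∈ U.flatten := by
  induction U generalizing v with
  | nil => simpa [shiftTops] using hb
  | cons c cs ih =>
    cases c with
    | nil => simpa [shiftTops] using hb
    | cons a t =>
      simp only [shiftTops, List.flatten_cons, List.cons_append, List.mem_cons,
        List.mem_append] at hb ⊢
      rcases hb with rfl | hb | hb
      · exact .inl rfl
      · exact .inr (.inr (.inl hb))
      · rcases ih hb with rfl | hb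
        · exact .inr (.inl rfl)
        · exact .inr (.inr (.inr hb))

lemma topsBelowLater_shiftTops {v : ℕ} {U : List (List ℕ)} (hU : TopsBelowLater U)
    (hv : ∀ b ∈ U.flatten, v < b) : TopsBelowLater (shiftTops v U) := by
  induction U generalizing v with
  | nil => simp [shiftTops, TopsBelowLater]
  | cons c cs ih =>
    obtain ⟨⟨hne, hc⟩, hhead, hcs⟩ := topsBelowLater_cons.1 hU
    obtain ⟨a, t, rfl⟩ := List.exists_cons_of_ne_nil hne
    have hvc : ∀ b ∈ a :: t, v < b :=
      fun b hb => hv b (List.mem_flatten_of_mem List.mem_cons_self hb)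
    refine topsBelowLater_cons.2 ⟨⟨List.cons_ne_nil _ _, ?_⟩, fun b hb => ?_, ih hcs hhead⟩
    · exact List.pairwise_cons.2 ⟨fun b hb => hvc b (List.mem_cons_of_mem _ hb),
        (List.pairwise_cons.1 hc).2⟩
    · rcases mem_flatten_shiftTops hb with rfl | hb
      · exact hvc _ List.mem_cons_self
      · exact hv b (List.mem_append_right _ hb)

lemma insertCol_eq_shiftTops {v : ℕ} {U : List (List ℕ)} (hU : TopsBelowLater U)
    (hv : ∀ b ∈ U.flatten, v < b) : insertCol v U = shiftTops v U := by
  induction U generalizing v with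
  | nil => rfl
  | cons c cs ih =>
    obtain ⟨⟨hne, hc⟩, hhead, hcs⟩ := topsBelowLater_cons.1 hU
    obtain ⟨a, t, rfl⟩ := List.exists_cons_of_ne_nil hne
    have hfind : (a :: t).find? (fun x => v < x) = some a :=
      List.find?_cons_of_pos (by simpa using hv a (by simp))
    have hbump : ((a :: t).map fun y => if y = a then v else y) = v :: t := by
      rw [List.map_cons, if_pos rfl]
      exact congrArg _ <| (List.map_congr_left fun y hy =>
        if_neg (List.rel_of_pairwise_cons hc hy).ne').trans (List.map_id t)
    simp only [List.headD_cons] at hhead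
    simp only [insertCol, hfind, hbump, ih hcs hhead, shiftTops]

lemma shiftTops_zipWith_cons (v : ℕ) {hs : List ℕ} {ts : List (List ℕ)}
    (h : hs.length = ts.length) :
    shiftTops v (List.zipWith List.cons hs ts) = List.zipWith List.cons (v :: hs) (ts ++ [[]]) := by
  induction hs generalizing v ts with
  | nil => obtain rfl := List.length_eq_zero_iff.1 h.symm; rfl
  | cons a hs ih =>
    obtain ⟨t, ts, rfl⟩ := List.exists_cons_of_length_eq_add_one h.symm
    simp [shiftTops, ih a (Nat.succ.inj h)]

lemma zipWith_cons_headD_tail {U : List (List ℕ)} (hU : [] ∉ U) :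
    List.zipWith List.cons (U.map (·.headD 0)) (U.map List.tail) = U := by
  induction U with
  | nil => rfl
  | cons c cs ih =>
    obtain ⟨a, t, rfl⟩ := List.exists_cons_of_ne_nil fun h => hU (h ▸ List.mem_cons_self)
    simp only [List.map_cons, List.zipWith_cons_cons, List.headD_cons, List.tail_cons,
      ih fun h => hU (List.mem_cons_of_mem _ h)]

lemma foldl_shiftTops (rs : List ℕ) {T : List (List ℕ)} (hT : [] ∉ T) :
    rs.reverse.foldl (fun U v => shiftTops v U) T =
      List.zipWith List.cons (rs ++ T.map (·.headD 0))
        (T.map List.tail ++ List.replicate rs.length []) := by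
  induction rs with
  | nil => simpa using (zipWith_cons_headD_tail hT).symm
  | cons r rs ih =>
    rw [List.reverse_cons, List.foldl_append, List.foldl_cons, List.foldl_nil, ih,
      shiftTops_zipWith_cons _ (by simp [Nat.add_comm]), List.length_cons, List.replicate_succ',
      List.append_assoc, List.cons_append]

lemma forall_mem_flatten_foldl_shiftTops {p : ℕ → Prop} {rs : List ℕ} {T : List (List ℕ)}
    (hrs : ∀ a ∈ rs, p a) (hT : ∀ b ∈ T.flatten, p b) :
    ∀ b ∈ (rs.reverse.foldl (fun U v => shiftTops v U) T).flatten, p b := by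
  induction rs with
  | nil => exact hT
  | cons r rs ih =>
    intro b hb
    rw [List.reverse_cons, List.foldl_append, List.foldl_cons, List.foldl_nil] at hb
    rcases mem_flatten_shiftTops hb with rfl | hb
    · exact hrs _ List.mem_cons_self
    · exact ih (fun a ha => hrs a (List.mem_cons_of_mem r ha)) b hb

lemma topsBelowLater_foldl_shiftTops {rs : List ℕ} {T : List (List ℕ)} (hT : TopsBelowLater T)
    (hsort : rs.Pairwise (· < ·)) (hsmall : ∀ a ∈ rs, ∀ b ∈ T.flatten, a < b) :
    TopsBelowLater (rs.reverse.foldl (fun U v => shiftTops v U) T) := by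
  induction rs with
  | nil => exact hT
  | cons r rs ih =>
    obtain ⟨hr, hsort⟩ := List.pairwise_cons.1 hsort
    rw [List.reverse_cons, List.foldl_append, List.foldl_cons, List.foldl_nil]
    exact topsBelowLater_shiftTops (ih hsort fun a ha => hsmall a (List.mem_cons_of_mem r ha))
      (forall_mem_flatten_foldl_shiftTops hr (hsmall r List.mem_cons_self))

lemma foldl_insertCol_eq_foldl_shiftTops {rs : List ℕ} {T : List (List ℕ)}
    (hT : TopsBelowLater T) (hsort : rs.Pairwise (· < ·))
    (hsmall : ∀ a ∈ rs, ∀ b ∈ T.flatten, a < b) :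
    rs.reverse.foldl (fun U v => insertCol v U) T =
      rs.reverse.foldl (fun U v => shiftTops v U) T := by
  induction rs with
  | nil => rfl
  | cons r rs ih =>
    obtain ⟨hr, hsort'⟩ := List.pairwise_cons.1 hsort
    have hsmall' : ∀ a ∈ rs, ∀ b ∈ T.flatten, a < b :=
      fun a ha => hsmall a (List.mem_cons_of_mem r ha)
    simp only [List.reverse_cons, List.foldl_append, List.foldl_cons, List.foldl_nil,
      ih hsort' hsmall']
    exact insertCol_eq_shiftTops (topsBelowLater_foldl_shiftTops hT hsort' hsmall')
      (forall_mem_flatten_foldl_shiftTops hr (hsmall r List.mem_cons_self))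

lemma colIndex_eq_of_mem {T : List (List ℕ)} {s i : ℕ} (hi : i < T.length) (hmem : s ∈ T[i])
    (hbefore : ∀ j (hj : j < i), s ∉ T[j]) : colIndex T s = i + 1 := by
  rw [colIndex, Nat.add_right_cancel_iff, List.findIdx_eq hi]
  simpa using ⟨hmem, hbefore⟩

end ColumnInsertion

open ColumnInsertion

theorem small_insertions_go_to_successive_columns_general (T : List (List ℕ))
    (hT : ColsStandard T)
    (rs : List ℕ) (hsort : rs.Pairwise (· < ·))
    (hsmall : ∀ a ∈ rs, ∀ b ∈ T.flatten, a < b)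
    (T' : List (List ℕ)) (hT' : T' = rs.reverse.foldl (fun U v => insertCol v U) T) :
    ∀ i, i < rs.length → colIndex T' (rs.getD i 0) = i + 1 := by
  have hTops := topsBelowLater_of_colsStandard hT
  rw [foldl_insertCol_eq_foldl_shiftTops hTops hsort hsmall,
    foldl_shiftTops rs fun h => (hTops.1 [] h).1 rfl] at hT'
  set ts := T.map List.tail ++ List.replicate rs.length []
  have hcol : ∀ j (hj : j < rs.length),
      T'[j]'(by simp [hT', ts]; omega) = rs[j] :: ts[j]'(by simp [ts]; omega) := by
    intro j hj
    simp [hT', List.getElem_append_left hj]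
  have hbelow : ∀ c ∈ ts, ∀ b ∈ c, b ∈ T.flatten := by
    intro c hc b hb
    simp only [ts, List.mem_append, List.mem_map, List.mem_replicate] at hc
    rcases hc with ⟨c, hcT, rfl⟩ | ⟨-, rfl⟩
    · exact List.mem_flatten_of_mem hcT (List.mem_of_mem_tail hb)
    · simp at hb
  intro i hi
  rw [List.getD_eq_getElem _ _ hi]
  refine colIndex_eq_of_mem _ ((hcol i hi).symm ▸ List.mem_cons_self) fun j hj hmem => ?_
  rw [hcol j (hj.trans hi)] at hmem
  rcases List.mem_cons.1 hmem with heq | hmem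
  · exact (List.pairwise_iff_getElem.1 hsort j i _ hi hj).ne heq.symm
  · exact (hsmall _ (List.getElem_mem hi) _ (hbelow _ (List.getElem_mem _) _ hmem)).false

/-- Special case of Lemma 2.2(1): column inserting values `r_{k-1} > ⋯ > r_1` smaller
than every entry of a standard tableau `T` places `r_i` in column `i`. -/
theorem small_insertions_go_to_successive_columns (T : List (List ℕ))
    (hT : ColsStandard T) (k : ℕ) (hk : 0 < k)
    (rs : List ℕ) (hlen : rs.length = k - 1) (hsort : rs.Pairwise (· < ·))
    (hsmall : ∀ a ∈ rs, ∀ b ∈ T.flatten, a < b)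
    (T' : List (List ℕ)) (hT' : T' = rs.reverse.foldl (fun U v => insertCol v U) T) :
    ∀ i, i < rs.length → colIndex T' (rs.getD i 0) = i + 1 :=
  small_insertions_go_to_successive_columns_general T hT rs hsort hsmall T' hT'
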